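/- arXiv:0801.2982 — 2 statements merged into one kernel-verified Lean document; each statement's English description precedes it below -/
import Mathlib

section
/- Let c, κ be positive integers and let M be a real cκ × κ matrix with rows indexed by pairs in [c]×[κ]. Then the cκ × κ² matrix M ⊗row J has linearly independent rows (equivalently, rank cκ) if and only if for each j ∈ [κ], the c rows of M indexed by (i,j), i ∈ [c], are linearly independent. -/
open Matrix

/-- The row-wise tensor product of two matrices. -/
def rowTensor {m s t : Type*} (N₁ : Matrix m s ℝ) (N₂ : Matrix m t ℝ) :
    Matrix m (s × t) ℝ :=
  Matrix.of fun i p => N₁ i p.1 * N₂ i p.2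

/-- The matrix `J = 1_cᵀ ⊗ I_κ` hiding class information. -/
def Jmat (c κ : ℕ) : Matrix (Fin c × Fin κ) (Fin κ) ℝ :=
  Matrix.of fun p k => if p.2 = k then 1 else 0

lemma sum_eval {c κ : ℕ} (M : Matrix (Fin c × Fin κ) (Fin κ) ℝ)
    (G : Fin c × Fin κ → ℝ) (s t : Fin κ) :
    (∑ p : Fin c × Fin κ, G p • rowTensor M (Jmat c κ) p) (s, t)
      = ∑ i : Fin c, G (i, t) * M (i, t) s := by
  simp [rowTensor, Jmat, Finset.sum_apply, Fintype.sum_prod_type, mul_ite]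

/-- The rows of `M ⊗row J` are linearly independent if and only if, for each
base `j`, the `c` rows of `M` indexed by `(i, j)`, `i ∈ [c]`, are linearly
independent. -/
theorem rowTensor_J_linearIndependent_iff {c κ : ℕ} (hc : 0 < c) (hκ : 0 < κ)
    (M : Matrix (Fin c × Fin κ) (Fin κ) ℝ) :
    LinearIndependent ℝ (fun p : Fin c × Fin κ => rowTensor M (Jmat c κ) p) ↔
      ∀ j : Fin κ, LinearIndependent ℝ (fun i : Fin c => M (i, j)) := by
  rw [Fintype.linearIndependent_iff]
  constructor
  · intro H j
    rw [Fintype.linearIndependent_iff]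
    intro g hg i
    have h := H (fun p => if p.2 = j then g p.1 else 0) ?_ (i, j)
    · simpa using h
    · funext q
      obtain ⟨s, t⟩ := q
      rw [sum_eval]
      by_cases ht : t = j
      · subst ht
        simpa using congrFun hg s
      · simp [ht]
  · intro H G hG p
    have h := (Fintype.linearIndependent_iff.mp (H p.2)) (fun i => G (i, p.2)) ?_ p.1
    · simpa using h
    · funext s
      have := congrFun hG (s, p.2)
      rw [sum_eval] at this
      simpa [Finset.sum_apply] using this
end

section
/- Let c, κ be positive integers. For k = 1, 2, let μ_k ∈ ℝ^{cκ} be a row vector (indexed by [c]×[κ]) with all entries positive, let R_k be a real cκ × cκ matrix with diag(μ_k)·R_k symmetric, let t_k ∈ ℝ, let σ̂_k be a permutation of [c] and σ̃_k a permutation of [κ], and let P_k be the permutation matrix on [c]×[κ] of the permutation (i,j) ↦ (σ̂_k(i), σ̃_k(j)). If μ₁P₁ = μ₂P₂ and P₁ᵀ·exp(R₁t₁)·J = P₂ᵀ·exp(R₂t₂)·J, then σ̃₁ = σ̃₂. -/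
/-!
Since `diag(μ) R` is symmetric, `diag(μ)` intertwines `R` with `Rᵀ`, hence `exp(tR/2)` with its
transpose, so `N = diag(μ) exp(tR) = exp(tR/2)ᵀ diag(μ) exp(tR/2)` is positive definite, and so is
`M = Jᵀ N J` because `J` is injective. Reindexing the sum defining `M_k` along `P_k`, and using that
`J` is invariant under `(σ̂, σ̃)` on rows and `σ̃` on columns, the hypotheses say that `M_k` is one
common matrix `L` with its rows permuted by `σ̃_k`. Finally, a row permutation `π ≠ 1` of a positive
definite `A` has strictly smaller trace, since `2 A_{π j, j} ≤ A_{π j, π j} + A_{j j}` with equality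
only at fixed points; applying this in both directions forces `σ̃₁ = σ̃₂`.
-/

open Matrix

/-- The permutation matrix of a permutation `σ`. -/
def permMatrix {n : Type*} [DecidableEq n] (σ : Equiv.Perm n) : Matrix n n ℝ :=
  Matrix.of fun i j => if σ i = j then 1 else 0

section Permutation

variable {n : Type*} [DecidableEq n]

lemma permMatrix_eq_permMatrix (σ : Equiv.Perm n) : permMatrix σ = σ.permMatrix ℝ := by
  ext i j
  simp [permMatrix, PEquiv.toMatrix_apply]

variable [Fintype n]

lemma vecMul_permMatrix_eq_comp (v : n → ℝ) (σ : Equiv.Perm n) :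
    v ᵥ* permMatrix σ = v ∘ σ.symm := by
  rw [permMatrix_eq_permMatrix, Matrix.vecMul_permMatrix]

lemma transpose_permMatrix_mul {m : Type*} (σ : Equiv.Perm n) (A : Matrix n m ℝ) :
    (permMatrix σ)ᵀ * A = A.submatrix σ.symm id := by
  rw [permMatrix_eq_permMatrix, transpose_permMatrix, PEquiv.toMatrix_toPEquiv_mul]
  rfl

end Permutation

section PosDef

variable {n : Type*} [Fintype n] [DecidableEq n]

lemma two_mul_apply_lt_of_posDef {A : Matrix n n ℝ} (hA : A.PosDef) {a b : n} (hab : a ≠ b) :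
    2 * A a b < A a a + A b b := by
  set x : n → ℝ := Pi.single a 1 - Pi.single b 1
  have hx : x ≠ 0 := by
    intro h
    simpa [x, hab] using congr_fun h a
  have hba : A b a = A a b := by simpa using congr_fun (congr_fun hA.isHermitian a) b
  have hquad : star x ⬝ᵥ (A *ᵥ x) = A a a + A b b - 2 * A a b := by
    simp only [x, star_trivial, mulVec_sub, mulVec_single, MulOpposite.op_one, one_smul,
      dotProduct_sub, sub_dotProduct, single_dotProduct, col_apply, one_mul, hba]
    ring
  linarith [hA.dotProduct_mulVec_pos hx]

lemma two_mul_apply_le_of_posDef {A : Matrix n n ℝ} (hA : A.PosDef) (a b : n) :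
    2 * A a b ≤ A a a + A b b := by
  rcases eq_or_ne a b with rfl | hab
  · exact (two_mul _).le
  · exact (two_mul_apply_lt_of_posDef hA hab).le

lemma trace_submatrix_lt_trace_of_posDef {A : Matrix n n ℝ} (hA : A.PosDef)
    {π : Equiv.Perm n} (hπ : π ≠ 1) : (A.submatrix π id).trace < A.trace := by
  obtain ⟨j₀, hj₀⟩ : ∃ j, π j ≠ j := by
    by_contra! h
    exact hπ (Equiv.ext h)
  have hsum : ∑ j, 2 * A (π j) j < ∑ j, (A (π j) (π j) + A j j) :=
    Finset.sum_lt_sum (fun j _ => two_mul_apply_le_of_posDef hA _ _)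
      ⟨j₀, Finset.mem_univ _, two_mul_apply_lt_of_posDef hA hj₀⟩
  rw [Finset.sum_add_distrib, Equiv.sum_comp π fun j => A j j, ← Finset.mul_sum] at hsum
  simp only [trace, diag_apply, submatrix_apply, id]
  linarith

lemma eq_of_posDef_submatrix {L : Matrix n n ℝ} {σ τ : Equiv.Perm n}
    (hσ : (L.submatrix σ id).PosDef) (hτ : (L.submatrix τ id).PosDef) : σ = τ := by
  by_contra hne
  have h₁ := trace_submatrix_lt_trace_of_posDef hτ (π := τ⁻¹ * σ)
    (inv_mul_eq_one.not.mpr (Ne.symm hne))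
  have h₂ := trace_submatrix_lt_trace_of_posDef hσ (π := σ⁻¹ * τ) (inv_mul_eq_one.not.mpr hne)
  simp only [submatrix_submatrix, Function.comp_id, ← Equiv.Perm.coe_mul, mul_inv_cancel_left]
    at h₁ h₂
  linarith

end PosDef

section Exp

variable {n : Type*} [Fintype n] [DecidableEq n]

lemma diagonal_mul_exp_eq_transpose_mul {μ : n → ℝ} {A : Matrix n n ℝ}
    (hA : (diagonal μ * A).IsSymm) :
    diagonal μ * NormedSpace.exp A = (NormedSpace.exp A)ᵀ * diagonal μ := by
  have h : SemiconjBy (diagonal μ) A Aᵀ := by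
    simpa [SemiconjBy, transpose_mul] using hA.symm
  rw [← exp_transpose]
  open scoped Matrix.Norms.Operator in exact h.exp_right

lemma posDef_diagonal_mul_exp {μ : n → ℝ} (hμ : ∀ i, 0 < μ i) {A : Matrix n n ℝ}
    (hA : (diagonal μ * A).IsSymm) : (diagonal μ * NormedSpace.exp A).PosDef := by
  set B := (1 / 2 : ℝ) • A
  have hB : (diagonal μ * B).IsSymm := by
    simpa [B, Matrix.mul_smul] using hA.smul (1 / 2 : ℝ)
  have hsplit : NormedSpace.exp A = NormedSpace.exp B * NormedSpace.exp B := by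
    rw [← exp_add_of_commute _ _ (Commute.refl B), ← add_smul]
    norm_num
  have hfactor : diagonal μ * NormedSpace.exp A =
      (NormedSpace.exp B)ᴴ * diagonal μ * NormedSpace.exp B := by
    rw [hsplit, ← Matrix.mul_assoc, diagonal_mul_exp_eq_transpose_mul hB,
      conjTranspose_eq_transpose_of_trivial]
  rw [hfactor]
  exact (PosDef.diagonal hμ).conjTranspose_mul_mul_same
    (mulVec_injective_of_isUnit (isUnit_exp _))

end Exp

section Jmat

variable {c κ : ℕ}

lemma Jmat_mulVec_injective (hc : 0 < c) : Function.Injective (Jmat c κ).mulVec := by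
  intro v w h
  funext k
  simpa [Jmat, mulVec, dotProduct] using congr_fun h (⟨0, hc⟩, k)

lemma Jmat_submatrix_prodCongr (σc : Equiv.Perm (Fin c)) (σκ : Equiv.Perm (Fin κ)) :
    (Jmat c κ).submatrix (Equiv.prodCongr σc σκ) σκ = Jmat c κ := by
  ext p k
  simp [Jmat]

lemma transpose_Jmat_mul_diagonal_mul {m : Type*} (σc : Equiv.Perm (Fin c))
    (σκ : Equiv.Perm (Fin κ)) (μ : Fin c × Fin κ → ℝ) (F : Matrix (Fin c × Fin κ) m ℝ) :
    (Jmat c κ)ᵀ * diagonal μ * F =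
      ((Jmat c κ)ᵀ * diagonal (μ ∘ (Equiv.prodCongr σc σκ).symm) *
        F.submatrix (Equiv.prodCongr σc σκ).symm id).submatrix σκ id := by
  have hJ : (Jmat c κ)ᵀ = ((Jmat c κ)ᵀ).submatrix σκ.symm (Equiv.prodCongr σc σκ).symm := by
    rw [← transpose_submatrix, Equiv.prodCongr_symm, Jmat_submatrix_prodCongr]
  conv_rhs => rw [hJ, ← submatrix_diagonal_equiv, submatrix_mul_equiv, submatrix_mul_equiv,
    submatrix_submatrix]
  simp

lemma posDef_transpose_Jmat_mul_diagonal_mul_exp_mul (hc : 0 < c) {μ : Fin c × Fin κ → ℝ}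
    (hμ : ∀ i, 0 < μ i) {R : Matrix (Fin c × Fin κ) (Fin c × Fin κ) ℝ}
    (hR : (diagonal μ * R).IsSymm) (t : ℝ) :
    ((Jmat c κ)ᵀ * diagonal μ * (NormedSpace.exp (t • R) * Jmat c κ)).PosDef := by
  have htR : (diagonal μ * (t • R)).IsSymm := by
    simpa only [Matrix.mul_smul] using hR.smul t
  simpa only [conjTranspose_eq_transpose_of_trivial, Matrix.mul_assoc] using
    (posDef_diagonal_mul_exp hμ htR).conjTranspose_mul_mul_same (Jmat_mulVec_injective hc)

end Jmat

theorem base_permutation_determined_general {c κ : ℕ} (hc : 0 < c)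
    (μ₁ μ₂ : Fin c × Fin κ → ℝ) (hμ₁ : ∀ x, 0 < μ₁ x) (hμ₂ : ∀ x, 0 < μ₂ x)
    (R₁ R₂ : Matrix (Fin c × Fin κ) (Fin c × Fin κ) ℝ)
    (hsym₁ : (Matrix.diagonal μ₁ * R₁).IsSymm)
    (hsym₂ : (Matrix.diagonal μ₂ * R₂).IsSymm)
    (t₁ t₂ : ℝ)
    (σc₁ σc₂ : Equiv.Perm (Fin c)) (σκ₁ σκ₂ : Equiv.Perm (Fin κ))
    (hμ : Matrix.vecMul μ₁ (permMatrix (Equiv.prodCongr σc₁ σκ₁)) =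
      Matrix.vecMul μ₂ (permMatrix (Equiv.prodCongr σc₂ σκ₂)))
    (hM : (permMatrix (Equiv.prodCongr σc₁ σκ₁))ᵀ * NormedSpace.exp (t₁ • R₁) *
        Jmat c κ =
      (permMatrix (Equiv.prodCongr σc₂ σκ₂))ᵀ * NormedSpace.exp (t₂ • R₂) *
        Jmat c κ) :
    σκ₁ = σκ₂ := by
  rw [vecMul_permMatrix_eq_comp, vecMul_permMatrix_eq_comp] at hμ
  rw [Matrix.mul_assoc, Matrix.mul_assoc, transpose_permMatrix_mul, transpose_permMatrix_mul] at hM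
  have h₁ := posDef_transpose_Jmat_mul_diagonal_mul_exp_mul hc hμ₁ hsym₁ t₁
  have h₂ := posDef_transpose_Jmat_mul_diagonal_mul_exp_mul hc hμ₂ hsym₂ t₂
  rw [transpose_Jmat_mul_diagonal_mul σc₁ σκ₁, hμ, hM] at h₁
  rw [transpose_Jmat_mul_diagonal_mul σc₂ σκ₂] at h₂
  exact eq_of_posDef_submatrix h₁ h₂

/-- The base permutation `σ̃` is determined by `μP` and `Pᵀ·exp(Rt)·J` when `P`
has the product form `P̂ ⊗ P̃`. -/
theorem base_permutation_determined {c κ : ℕ} (hc : 0 < c) (hκ : 0 < κ)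
    (μ₁ μ₂ : Fin c × Fin κ → ℝ) (hμ₁ : ∀ x, 0 < μ₁ x) (hμ₂ : ∀ x, 0 < μ₂ x)
    (R₁ R₂ : Matrix (Fin c × Fin κ) (Fin c × Fin κ) ℝ)
    (hsym₁ : (Matrix.diagonal μ₁ * R₁).IsSymm)
    (hsym₂ : (Matrix.diagonal μ₂ * R₂).IsSymm)
    (t₁ t₂ : ℝ)
    (σc₁ σc₂ : Equiv.Perm (Fin c)) (σκ₁ σκ₂ : Equiv.Perm (Fin κ))
    (hμ : Matrix.vecMul μ₁ (permMatrix (Equiv.prodCongr σc₁ σκ₁)) =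
      Matrix.vecMul μ₂ (permMatrix (Equiv.prodCongr σc₂ σκ₂)))
    (hM : (permMatrix (Equiv.prodCongr σc₁ σκ₁))ᵀ * NormedSpace.exp (t₁ • R₁) *
        Jmat c κ =
      (permMatrix (Equiv.prodCongr σc₂ σκ₂))ᵀ * NormedSpace.exp (t₂ • R₂) *
        Jmat c κ) :
    σκ₁ = σκ₂ :=
  base_permutation_determined_general hc μ₁ μ₂ hμ₁ hμ₂ R₁ R₂ hsym₁ hsym₂ t₁ t₂ σc₁ σc₂ σκ₁ σκ₂ hμ hM
end
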